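/- arXiv:2305.12387 — 9 statements merged into one kernel-verified Lean document; each statement's English description precedes it below -/
import Mathlib

section
/- Let n ≥ 1 and let 0 < τ_1 ≤ τ_2 ≤ … ≤ τ_n be real numbers, and let S ≥ 1/4 be a real constant. Define j* as the smallest index m ∈ {1,…,n} such that either m = n or S·(∑_{i=1}^m 1/τ_i)^{-1} < τ_{m+1}, and set t_1 = S·(∑_{i=1}^{j*} 1/τ_i)^{-1} and t_2 = min_{j ∈ {1,…,n}} (∑_{i=1}^j 1/τ_i)^{-1}·(S + j). Then t_1 ≤ t_2 ≤ 6·t_1. -/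
/-!
Write `A j = ∑_{i ≤ j} 1/τᵢ` (`recipSum τ j`). For `j ≤ j*` the bound `S / A j* ≤ (S + j) / A j`
is monotonicity of `A`. For `j > j*` every `τᵢ` with `i > j*` exceeds `S / A j*`, so each new term
of `A j` is at most `A j* / S` and `S · A j ≤ (S + j - j*) · A j*`. Conversely, minimality of `j*`
gives `τ_{j*} ≤ S / A (j* - 1)`, while `A (j* - 1) ≥ (j* - 1) / τ_{j*}`; hence `j* ≤ S + 1`, and
the term `j = j*` of the minimum is at most `(2S + 1) / A j* ≤ 6 S / A j*` because `S ≥ 1/4`.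
-/

open Finset

noncomputable section

def recipSum (τ : ℕ → ℝ) (j : ℕ) : ℝ := ∑ i ∈ Icc 1 j, 1 / τ i

variable {τ : ℕ → ℝ}

lemma recipSum_pos {j : ℕ} (hj : 1 ≤ j) (hpos : ∀ i ∈ Icc 1 j, 0 < τ i) :
    0 < recipSum τ j :=
  sum_pos (fun i hi => one_div_pos.mpr (hpos i hi)) (nonempty_Icc.mpr hj)

lemma recipSum_mono {j k : ℕ} (hjk : j ≤ k) (hpos : ∀ i ∈ Icc 1 k, 0 < τ i) :
    recipSum τ j ≤ recipSum τ k :=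
  sum_le_sum_of_subset_of_nonneg (Icc_subset_Icc le_rfl hjk)
    fun i hi _ => (one_div_pos.mpr (hpos i hi)).le

lemma recipSum_eq_add_sum_Ioc {k j : ℕ} (hkj : k ≤ j) :
    recipSum τ j = recipSum τ k + ∑ i ∈ Ioc k j, 1 / τ i := by
  have hIcc (m : ℕ) : Icc 1 m = Ioc 0 m := Icc_add_one_left_eq_Ioc 0 m
  rw [recipSum, recipSum, hIcc, hIcc, sum_Ioc_consecutive _ (Nat.zero_le k) hkj]

lemma natCast_le_of_le_mul_inv_recipSum {m : ℕ} {c S : ℝ} (hS : 0 ≤ S)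
    (hpos : ∀ i ∈ Icc 1 m, 0 < τ i) (hle : ∀ i ∈ Icc 1 m, τ i ≤ c)
    (hc : c ≤ S * (recipSum τ m)⁻¹) : (m : ℝ) ≤ S := by
  rcases Nat.eq_zero_or_pos m with rfl | hm
  · simpa using hS
  have hA := recipSum_pos hm hpos
  have hc0 : 0 < c := (hpos 1 (left_mem_Icc.mpr hm)).trans_le (hle 1 (left_mem_Icc.mpr hm))
  have hcard : (m : ℝ) * (1 / c) ≤ recipSum τ m := by
    simpa [recipSum] using card_nsmul_le_sum (Icc 1 m) (fun i => 1 / τ i) (1 / c)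
      fun i hi => one_div_le_one_div_of_le (hpos i hi) (hle i hi)
  calc (m : ℝ) = m * (1 / c) * c := by field_simp
    _ ≤ recipSum τ m * c := by gcongr
    _ ≤ recipSum τ m * (S * (recipSum τ m)⁻¹) := by gcongr
    _ = S := by field_simp

lemma mul_recipSum_le {k j : ℕ} {S : ℝ} (hS : 0 < S) (hA : 0 < recipSum τ k) (hkj : k ≤ j)
    (hτ : ∀ i ∈ Ioc k j, S * (recipSum τ k)⁻¹ ≤ τ i) :
    S * recipSum τ j ≤ (S + ↑(j - k)) * recipSum τ k := by
  have hterm : ∀ i ∈ Ioc k j, S * (1 / τ i) ≤ recipSum τ k := by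
    intro i hi
    have hτi := hτ i hi
    have hτ0 : 0 < τ i := lt_of_lt_of_le (by positivity) hτi
    rw [mul_one_div, div_le_iff₀ hτ0]
    calc S = recipSum τ k * (S * (recipSum τ k)⁻¹) := by field_simp
      _ ≤ recipSum τ k * τ i := by gcongr
  have htail : S * ∑ i ∈ Ioc k j, 1 / τ i ≤ ↑(j - k) * recipSum τ k := by
    rw [mul_sum]
    simpa using sum_le_card_nsmul (Ioc k j) _ _ hterm
  rw [recipSum_eq_add_sum_Ioc hkj]
  linarith

lemma mul_inv_recipSum_le {k j : ℕ} {S : ℝ} (hS : 0 < S) (hk : 1 ≤ k) (hj : 1 ≤ j)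
    (hpos : ∀ i ∈ Icc 1 k, 0 < τ i) (hτ : ∀ i ∈ Ioc k j, S * (recipSum τ k)⁻¹ ≤ τ i) :
    S * (recipSum τ k)⁻¹ ≤ (recipSum τ j)⁻¹ * (S + j) := by
  have hAk := recipSum_pos hk hpos
  rcases le_or_gt j k with hjk | hkj
  · have hAj := recipSum_pos hj fun i hi => hpos i (Icc_subset_Icc le_rfl hjk hi)
    calc S * (recipSum τ k)⁻¹ ≤ S * (recipSum τ j)⁻¹ := by
          gcongr; exact recipSum_mono hjk hpos
      _ ≤ (recipSum τ j)⁻¹ * (S + j) := by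
          rw [mul_comm]; gcongr; linarith [(j.cast_nonneg : (0 : ℝ) ≤ j)]
  · have hAj : 0 < recipSum τ j := hAk.trans_le <| by
      rw [recipSum_eq_add_sum_Ioc hkj.le, le_add_iff_nonneg_right]
      exact sum_nonneg fun i hi =>
        (one_div_pos.mpr (lt_of_lt_of_le (by positivity) (hτ i hi))).le
    have hkey := mul_recipSum_le hS hAk hkj.le hτ
    rw [← div_eq_mul_inv, inv_mul_eq_div, div_le_div_iff₀ hAk hAj]
    have : ((j - k : ℕ) : ℝ) ≤ j := by exact_mod_cast Nat.sub_le j k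
    nlinarith

end

theorem stmt0 (n : ℕ) (hn : 1 ≤ n) (τ : ℕ → ℝ)
    (hpos : ∀ i, 1 ≤ i → i ≤ n → 0 < τ i)
    (hmono : ∀ i j, 1 ≤ i → i ≤ j → j ≤ n → τ i ≤ τ j)
    (S : ℝ) (hS : 1/4 ≤ S)
    (jstar : ℕ) (hjmem : jstar ∈ Finset.Icc 1 n)
    (hjprop : jstar = n ∨ S * (∑ i ∈ Finset.Icc 1 jstar, 1/τ i)⁻¹ < τ (jstar + 1))
    (hjmin : ∀ m ∈ Finset.Icc 1 n, m < jstar →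
      ¬(m = n ∨ S * (∑ i ∈ Finset.Icc 1 m, 1/τ i)⁻¹ < τ (m + 1)))
    (t₁ t₂ : ℝ)
    (ht₁ : t₁ = S * (∑ i ∈ Finset.Icc 1 jstar, 1/τ i)⁻¹)
    (ht₂ : t₂ = (Finset.Icc 1 n).inf' (Finset.nonempty_Icc.mpr hn)
      (fun j => (∑ i ∈ Finset.Icc 1 j, 1/τ i)⁻¹ * (S + j))) :
    t₁ ≤ t₂ ∧ t₂ ≤ 6 * t₁ := by
  obtain ⟨hj1, hjn⟩ := mem_Icc.mp hjmem
  have hS0 : 0 < S := by linarith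
  have hposj : ∀ i ∈ Icc 1 jstar, 0 < τ i := fun i hi =>
    hpos i (mem_Icc.mp hi).1 ((mem_Icc.mp hi).2.trans hjn)
  have hlower : ∀ j ∈ Icc 1 n, S * (recipSum τ jstar)⁻¹ ≤ (recipSum τ j)⁻¹ * (S + j) := by
    intro j hj
    refine mul_inv_recipSum_le hS0 hj1 (mem_Icc.mp hj).1 hposj fun i hi => ?_
    obtain ⟨hki, hij⟩ := mem_Ioc.mp hi
    have hjprop' := hjprop.resolve_left (by have := (mem_Icc.mp hj).2; omega)
    exact hjprop'.le.trans (hmono _ _ (by omega) hki (hij.trans (mem_Icc.mp hj).2))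
  have hjS : (jstar : ℝ) ≤ S + 1 := by
    obtain ⟨m, rfl⟩ := Nat.exists_eq_add_of_le' hj1
    rcases Nat.eq_zero_or_pos m with rfl | hm
    · push_cast; linarith
    have hstop := not_or.mp (hjmin m (mem_Icc.mpr ⟨hm, by omega⟩) (by omega))
    have := natCast_le_of_le_mul_inv_recipSum hS0.le
      (fun i hi => hposj i (Icc_subset_Icc le_rfl (by omega) hi))
      (fun i hi => hmono i (m + 1) (mem_Icc.mp hi).1 (by have := (mem_Icc.mp hi).2; omega) hjn)
      (not_lt.mp hstop.2)
    push_cast; linarith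
  have hA : 0 < (recipSum τ jstar)⁻¹ := inv_pos.mpr (recipSum_pos hj1 hposj)
  subst ht₁ ht₂
  refine ⟨le_inf' _ _ hlower, (inf'_le _ hjmem).trans ?_⟩
  change (recipSum τ jstar)⁻¹ * (S + jstar) ≤ 6 * (S * (recipSum τ jstar)⁻¹)
  nlinarith
end

section
/- Let n ≥ 1, let 0 < τ_1 ≤ τ_2 ≤ … ≤ τ_n be real numbers, and let η be a natural number with 1 ≤ η ≤ n. Set t_1 = η · min_{m ∈ {1,…,η}} τ_m/m and t_2 = min_{m ∈ {1,…,n}} τ_m·(1 + η/m). Then t_1 ≤ t_2 ≤ 2·t_1. -/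
open Finset

theorem stmt1 (n : ℕ) (hn : 1 ≤ n) (τ : ℕ → ℝ)
    (hpos : ∀ i, 1 ≤ i → i ≤ n → 0 < τ i)
    (hmono : ∀ i j, 1 ≤ i → i ≤ j → j ≤ n → τ i ≤ τ j)
    (η : ℕ) (hη1 : 1 ≤ η) (hηn : η ≤ n)
    (t₁ t₂ : ℝ)
    (ht₁ : t₁ = η * (Finset.Icc 1 η).inf' (Finset.nonempty_Icc.mpr hη1)
      (fun m => τ m / m))
    (ht₂ : t₂ = (Finset.Icc 1 n).inf' (Finset.nonempty_Icc.mpr hn)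
      (fun m => τ m * (1 + (η : ℝ) / m))) :
    t₁ ≤ t₂ ∧ t₂ ≤ 2 * t₁ := by
  have hηpos : (0:ℝ) < η := by exact_mod_cast hη1
  constructor
  · rw [ht₁, ht₂]
    apply Finset.le_inf'
    intro m hm
    simp only [Finset.mem_Icc] at hm
    have hm1 := hm.1
    have hmn := hm.2
    have hmpos : (0:ℝ) < m := by exact_mod_cast hm1
    have hτm : 0 < τ m := hpos m hm1 hmn
    by_cases hme : m ≤ η
    · have h1 : (Finset.Icc 1 η).inf' (Finset.nonempty_Icc.mpr hη1)
          (fun m => τ m / m) ≤ τ m / m :=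
        Finset.inf'_le _ (Finset.mem_Icc.mpr ⟨hm1, hme⟩)
      calc (η:ℝ) * (Finset.Icc 1 η).inf' (Finset.nonempty_Icc.mpr hη1)
            (fun m => τ m / m) ≤ η * (τ m / m) := by
              exact mul_le_mul_of_nonneg_left h1 hηpos.le
        _ = τ m * ((η:ℝ) / m) := by ring
        _ ≤ τ m * (1 + (η:ℝ) / m) := by
              apply mul_le_mul_of_nonneg_left _ hτm.le
              linarith
    · push_neg at hme
      have h1 : (Finset.Icc 1 η).inf' (Finset.nonempty_Icc.mpr hη1)
          (fun m => τ m / m) ≤ τ η / η :=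
        Finset.inf'_le _ (Finset.mem_Icc.mpr ⟨hη1, le_refl η⟩)
      have hτη : τ η ≤ τ m := hmono η m hη1 hme.le hmn
      calc (η:ℝ) * (Finset.Icc 1 η).inf' (Finset.nonempty_Icc.mpr hη1)
            (fun m => τ m / m) ≤ η * (τ η / η) :=
              mul_le_mul_of_nonneg_left h1 hηpos.le
        _ = τ η := by field_simp
        _ ≤ τ m := hτη
        _ ≤ τ m * (1 + (η:ℝ) / m) := by
              nlinarith [div_nonneg hηpos.le hmpos.le]
  · obtain ⟨k, hk, heq⟩ := Finset.exists_mem_eq_inf' (Finset.nonempty_Icc.mpr hη1)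
      (fun m => τ m / m)
    simp only [Finset.mem_Icc] at hk
    have hk1 := hk.1
    have hkη := hk.2
    have hkn : k ≤ n := le_trans hkη hηn
    have hkpos : (0:ℝ) < k := by exact_mod_cast hk1
    have hτk : 0 < τ k := hpos k hk1 hkn
    have h2 : t₂ ≤ τ k * (1 + (η:ℝ) / k) := by
      rw [ht₂]
      exact Finset.inf'_le _ (Finset.mem_Icc.mpr ⟨hk1, hkn⟩)
    have ht1' : t₁ = η * (τ k / k) := by rw [ht₁, heq]
    have hkle : (k:ℝ) ≤ η := by exact_mod_cast hkη
    calc t₂ ≤ τ k * (1 + (η:ℝ) / k) := h2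
      _ ≤ 2 * ((η:ℝ) * (τ k / k)) := by
          have h4 : (1:ℝ) ≤ (η:ℝ) / k := by
            rw [le_div_iff₀ hkpos]; linarith
          have h5 : (1:ℝ) + (η:ℝ)/k ≤ 2 * ((η:ℝ)/k) := by linarith
          calc τ k * (1 + (η:ℝ)/k) ≤ τ k * (2 * ((η:ℝ)/k)) :=
                mul_le_mul_of_nonneg_left h5 hτk.le
            _ = 2 * ((η:ℝ) * (τ k / k)) := by ring
      _ = 2 * t₁ := by rw [ht1']
end

section
/- Let n ≥ 1, let 0 < τ_1 ≤ τ_2 ≤ … ≤ τ_n be real numbers, and let S ≥ 1 be a natural number. Then there exist natural numbers B_1,…,B_n ≥ 0 such that ∑_{i=1}^n B_i ≥ S and, for every index i with B_i ≥ 1, τ_i·(1 + B_i) ≤ 2 · min_{j ∈ {1,…,n}} (∑_{i'=1}^j 1/τ_{i'})^{-1}·(S + j). -/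
/-!
Take the time budget `T = 2 min_j f j`, where `f j = (∑_{i ≤ j} 1/τ i)⁻¹ (S + j)`, and let
worker `i` contribute `⌊T / τ i⌋₊ - 1` gradients; any worker contributing at least one gradient
then finishes within `T`. At a minimiser `j₀` of `f` we have `T ∑_{i ≤ j₀} 1/τ i = 2 (S + j₀)`,
and since `⌊x⌋₊ - 1 ≥ x - 2`, the first `j₀` workers alone contribute at least
`2 (S + j₀) - 2 j₀ = 2 S ≥ S` gradients.
-/

open Finset

noncomputable def batchAllocation (T : ℝ) (τ : ℕ → ℝ) (i : ℕ) : ℕ := ⌊T / τ i⌋₊ - 1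

lemma sub_two_le_floor_sub_one {K : Type*} [Field K] [LinearOrder K] [IsStrictOrderedRing K]
    [FloorSemiring K] (x : K) : x - 2 ≤ ((⌊x⌋₊ - 1 : ℕ) : K) :=
  calc x - 2 ≤ (⌊x⌋₊ : K) - 1 := by linarith [Nat.lt_floor_add_one x]
    _ ≤ ((⌊x⌋₊ - 1 : ℕ) : K) := by rw [sub_le_iff_le_add]; exact_mod_cast le_tsub_add

lemma mul_one_add_batchAllocation_le {T : ℝ} {τ : ℕ → ℝ} {i : ℕ} (hτ : 0 < τ i)
    (hB : 1 ≤ batchAllocation T τ i) : τ i * (1 + (batchAllocation T τ i : ℝ)) ≤ T := by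
  unfold batchAllocation at *
  have hfloor : 0 < ⌊T / τ i⌋₊ := by omega
  have hcast : 1 + ((⌊T / τ i⌋₊ - 1 : ℕ) : ℝ) = ⌊T / τ i⌋₊ := by
    rw [Nat.cast_sub hfloor, Nat.cast_one, add_sub_cancel]
  rw [hcast, ← le_div_iff₀' hτ]
  exact Nat.floor_le (Nat.pos_of_floor_pos hfloor).le

lemma sum_batchAllocation_ge (T : ℝ) (τ : ℕ → ℝ) (s : Finset ℕ) :
    T * ∑ i ∈ s, 1 / τ i - 2 * #s ≤ ∑ i ∈ s, (batchAllocation T τ i : ℝ) :=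
  calc T * ∑ i ∈ s, 1 / τ i - 2 * #s = ∑ i ∈ s, (T / τ i - 2) := by
        rw [sum_sub_distrib, mul_sum, sum_const, nsmul_eq_mul]
        simp only [mul_one_div]
        ring
    _ ≤ _ := sum_le_sum fun i _ => sub_two_le_floor_sub_one _

theorem stmt3_general (n : ℕ) (hn : 1 ≤ n) (τ : ℕ → ℝ)
    (hpos : ∀ i, 1 ≤ i → i ≤ n → 0 < τ i)
    (S : ℕ) :
    ∃ B : ℕ → ℕ,
      S ≤ ∑ i ∈ Finset.Icc 1 n, B i ∧
      ∀ i ∈ Finset.Icc 1 n, 1 ≤ B i →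
        τ i * (1 + (B i : ℝ)) ≤
          2 * (Finset.Icc 1 n).inf' (Finset.nonempty_Icc.mpr hn)
            (fun j => (∑ i' ∈ Finset.Icc 1 j, 1/τ i')⁻¹ * ((S : ℝ) + j)) := by
  set f : ℕ → ℝ := fun j => (∑ i' ∈ Icc 1 j, 1 / τ i')⁻¹ * ((S : ℝ) + j)
  obtain ⟨j₀, hj₀, hmin⟩ := exists_mem_eq_inf' (nonempty_Icc.mpr hn) f
  set T := 2 * (Icc 1 n).inf' (nonempty_Icc.mpr hn) f
  rw [mem_Icc] at hj₀
  refine ⟨batchAllocation T τ, ?_, fun i hi => mul_one_add_batchAllocation_le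
    (hpos i (mem_Icc.mp hi).1 (mem_Icc.mp hi).2)⟩
  have hrate : 0 < ∑ i ∈ Icc 1 j₀, 1 / τ i := sum_pos
    (fun i hi => one_div_pos.mpr (hpos i (mem_Icc.mp hi).1 ((mem_Icc.mp hi).2.trans hj₀.2)))
    (nonempty_Icc.mpr hj₀.1)
  have hbudget : T * ∑ i ∈ Icc 1 j₀, 1 / τ i = 2 * (S + j₀) := by
    simp only [T, hmin, f]
    field_simp
  have hfirst := sum_batchAllocation_ge T τ (Icc 1 j₀)
  rw [hbudget, Nat.card_Icc, add_tsub_cancel_right] at hfirst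
  have hall : ∑ i ∈ Icc 1 j₀, (batchAllocation T τ i : ℝ) ≤
      ∑ i ∈ Icc 1 n, (batchAllocation T τ i : ℝ) :=
    sum_le_sum_of_subset_of_nonneg (Icc_subset_Icc_right hj₀.2) fun _ _ _ => Nat.cast_nonneg _
  exact_mod_cast (show (S : ℝ) ≤ ∑ i ∈ Icc 1 n, (batchAllocation T τ i : ℝ) by
    linarith [(Nat.cast_nonneg S : (0 : ℝ) ≤ S)])

theorem stmt3 (n : ℕ) (hn : 1 ≤ n) (τ : ℕ → ℝ)
    (hpos : ∀ i, 1 ≤ i → i ≤ n → 0 < τ i)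
    (hmono : ∀ i j, 1 ≤ i → i ≤ j → j ≤ n → τ i ≤ τ j)
    (S : ℕ) (hS : 1 ≤ S) :
    ∃ B : ℕ → ℕ,
      S ≤ ∑ i ∈ Finset.Icc 1 n, B i ∧
      ∀ i ∈ Finset.Icc 1 n, 1 ≤ B i →
        τ i * (1 + (B i : ℝ)) ≤
          2 * (Finset.Icc 1 n).inf' (Finset.nonempty_Icc.mpr hn)
            (fun j => (∑ i' ∈ Finset.Icc 1 j, 1/τ i')⁻¹ * ((S : ℝ) + j)) :=
  stmt3_general n hn τ hpos S
end

section
/- Let n ≥ 1, let 0 < τ_1 ≤ τ_2 ≤ … ≤ τ_n be real numbers, and let S > 0 be real. Set t' = 2·(τ_n + (1/n ∑_{i=1}^n τ_i)·S/n). Then there exist natural numbers B_1,…,B_n with B_i ≥ 1 for all i, τ_i·(1 + B_i) ≤ 2·t' for all i ∈ {1,…,n}, and (1/n ∑_{i=1}^n 1/B_i)^{-1} ≥ S/n. -/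
/-!
Give worker `i` the batch `B i = ⌊t' / τ i⌋₊`. Since `τ i ≤ τ n ≤ t'`, each batch is nonempty and
takes time `τ i * (1 + B i) ≤ τ i + t' ≤ 2 t'`. Rounding down loses at most half of a number `≥ 1`,
so `1 / B i ≤ 2 τ i / t'`, and summing gives `∑ 1 / B i ≤ 2 (∑ τ i) / t' ≤ n² / S`, because `t'`
contains the term `2 (∑ τ i) S / n²`.
-/

open Finset

section Floor

variable {K : Type*} [Field K] [LinearOrder K] [IsStrictOrderedRing K] [FloorSemiring K]

lemma le_two_mul_natFloor {x : K} (hx : 1 ≤ x) : x ≤ 2 * ⌊x⌋₊ := by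
  have hfloor : (1 : K) ≤ ⌊x⌋₊ := by exact_mod_cast (Nat.one_le_floor_iff x).2 hx
  linarith [Nat.lt_floor_add_one x]

section

variable {τ t : K}

lemma one_le_natFloor_div (hτ : 0 < τ) (hτt : τ ≤ t) : 1 ≤ ⌊t / τ⌋₊ :=
  (Nat.one_le_floor_iff _).2 ((one_le_div hτ).2 hτt)

lemma mul_one_add_natFloor_div_le (hτ : 0 < τ) (hτt : τ ≤ t) :
    τ * (1 + ⌊t / τ⌋₊) ≤ 2 * t := by
  have hfloor : τ * ⌊t / τ⌋₊ ≤ τ * (t / τ) :=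
    mul_le_mul_of_nonneg_left (Nat.floor_le (div_nonneg (hτ.le.trans hτt) hτ.le)) hτ.le
  rw [mul_div_cancel₀ t hτ.ne'] at hfloor
  linarith

lemma one_div_natFloor_div_le (hτ : 0 < τ) (hτt : τ ≤ t) :
    1 / (⌊t / τ⌋₊ : K) ≤ 2 * τ / t := by
  have ht : 0 < t := hτ.trans_le hτt
  have hfloor : (0 : K) < ⌊t / τ⌋₊ := by exact_mod_cast one_le_natFloor_div hτ hτt
  rw [div_le_div_iff₀ hfloor ht]
  have hhalf := le_two_mul_natFloor ((one_le_div hτ).2 hτt)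
  rw [div_le_iff₀ hτ] at hhalf
  linarith

end

lemma exists_batches {ι : Type*} (s : Finset ι) (τ : ι → K) (t : K)
    (hτ : ∀ i ∈ s, 0 < τ i) (hτt : ∀ i ∈ s, τ i ≤ t) :
    ∃ B : ι → ℕ, (∀ i ∈ s, 1 ≤ B i) ∧ (∀ i ∈ s, τ i * (1 + (B i : K)) ≤ 2 * t) ∧
      ∑ i ∈ s, 1 / (B i : K) ≤ 2 * (∑ i ∈ s, τ i) / t := by
  refine ⟨fun i ↦ ⌊t / τ i⌋₊, fun i hi ↦ one_le_natFloor_div (hτ i hi) (hτt i hi),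
    fun i hi ↦ mul_one_add_natFloor_div_le (hτ i hi) (hτt i hi), ?_⟩
  calc ∑ i ∈ s, 1 / (⌊t / τ i⌋₊ : K) ≤ ∑ i ∈ s, 2 * τ i / t :=
        sum_le_sum fun i hi ↦ one_div_natFloor_div_le (hτ i hi) (hτt i hi)
    _ = 2 * (∑ i ∈ s, τ i) / t := by rw [← sum_div, ← mul_sum]

end Floor

theorem stmt4 (n : ℕ) (hn : 1 ≤ n) (τ : ℕ → ℝ)
    (hpos : ∀ i, 1 ≤ i → i ≤ n → 0 < τ i)
    (hmono : ∀ i j, 1 ≤ i → i ≤ j → j ≤ n → τ i ≤ τ j)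
    (S : ℝ) (hS : 0 < S)
    (t' : ℝ)
    (ht' : t' = 2 * (τ n + ((1/(n : ℝ)) * ∑ i ∈ Finset.Icc 1 n, τ i) * S / n)) :
    ∃ B : ℕ → ℕ,
      (∀ i ∈ Finset.Icc 1 n, 1 ≤ B i) ∧
      (∀ i ∈ Finset.Icc 1 n, τ i * (1 + (B i : ℝ)) ≤ 2 * t') ∧
      S / n ≤ ((1/(n : ℝ)) * ∑ i ∈ Finset.Icc 1 n, 1/(B i : ℝ))⁻¹ := by
  have hn' : (0 : ℝ) < n := by exact_mod_cast hn
  have hnmem : n ∈ Icc 1 n := mem_Icc.2 ⟨hn, le_rfl⟩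
  have hτ : ∀ i ∈ Icc 1 n, 0 < τ i := fun i hi ↦ hpos i (mem_Icc.1 hi).1 (mem_Icc.1 hi).2
  set T := ∑ i ∈ Icc 1 n, τ i
  have hT : 0 < T := sum_pos hτ ⟨n, hnmem⟩
  have ht'T : t' = 2 * τ n + 2 * T * S / n ^ 2 := by rw [ht']; field_simp
  have hτt : ∀ i ∈ Icc 1 n, τ i ≤ t' := fun i hi ↦ by
    have := hmono i n (mem_Icc.1 hi).1 (mem_Icc.1 hi).2 le_rfl
    have : 0 ≤ 2 * T * S / n ^ 2 := by positivity
    linarith [hτ n hnmem]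
  obtain ⟨B, hB1, hBtime, hBsum⟩ := exists_batches (Icc 1 n) τ t' hτ hτt
  refine ⟨B, hB1, hBtime, ?_⟩
  have hmean : 0 < (1 / (n : ℝ)) * ∑ i ∈ Icc 1 n, 1 / (B i : ℝ) := by
    refine mul_pos (by positivity) (sum_pos (fun i hi ↦ ?_) ⟨n, hnmem⟩)
    have : (1 : ℝ) ≤ B i := by exact_mod_cast hB1 i hi
    positivity
  have ht'pos : 0 < t' := (hτ n hnmem).trans_le (hτt n hnmem)
  rw [le_inv_comm₀ (by positivity) hmean, inv_div]
  calc (1 / (n : ℝ)) * ∑ i ∈ Icc 1 n, 1 / (B i : ℝ) ≤ (1 / n) * (2 * T / t') := by gcongr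
    _ ≤ n / S := by
      rw [div_mul_div_comm, div_le_div_iff₀ (by positivity) hS, ht'T]
      field_simp
      nlinarith [hτ n hnmem]
end

section
/- Fix d ≥ 1 and for x ∈ ℝ^d define prog(x) = max{j ∈ {1,…,d} : x_j ≠ 0}, with prog(x) = 0 when x = 0. Let f : ℝ^d → ℝ be differentiable, let p ∈ (0,1], and let ξ be a Bernoulli(p) random variable with values in {0,1}. For x ∈ ℝ^d define the random vector ĝ(x,ξ) ∈ ℝ^d coordinatewise by ĝ(x,ξ)_j = ∂_j f(x)·(1 + 1[j > prog(x)]·(ξ/p − 1)). Suppose x ∈ ℝ^d satisfies the zero-chain condition prog(∇f(x)) ≤ prog(x) + 1. Then E_ξ[ĝ(x,ξ)] = ∇f(x) and E_ξ[‖ĝ(x,ξ) − ∇f(x)‖²] ≤ ‖∇f(x)‖_∞² · (1 − p)/p, where ‖·‖ is the Euclidean norm and ‖·‖_∞ is the supremum norm. -/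
open MeasureTheory Finset

/-!
Writing `g = ∇f(x)` and `v` for the part of `g` beyond coordinate `prog x`, the estimator is
`ĝ(x, ξ) = g + (ξ/p - 1) • v`. Since `ξ/p - 1` has mean `0` and second moment `(1 - p)/p`, the
estimator is unbiased with variance `(1 - p)/p · ‖v‖²`. The zero-chain condition leaves at most
one nonzero coordinate in `v`, so `‖v‖² ≤ ‖g‖_∞²`.
-/

/-- `prog x` is the largest (1-based) index of a nonzero coordinate of `x`, and `0` if `x = 0`. -/
noncomputable def prog {d : ℕ} (x : EuclideanSpace ℝ (Fin d)) : ℕ :=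
  Finset.univ.sup (fun j : Fin d => if x j ≠ 0 then (j : ℕ) + 1 else 0)

/-- The stochastic gradient estimator
`ĝ(x,ξ)_j = ∂_j f(x)·(1 + 1[j > prog(x)]·(ξ/p − 1))`. -/
noncomputable def ghat {d : ℕ} (f : EuclideanSpace ℝ (Fin d) → ℝ) (p : ℝ)
    (x : EuclideanSpace ℝ (Fin d)) (s : ℝ) : EuclideanSpace ℝ (Fin d) :=
  WithLp.toLp 2 (fun j => gradient f x j * (1 + (if prog x < (j : ℕ) + 1 then (1 : ℝ) else 0) * (s / p - 1)))

theorem integral_comp_eq_of_bernoulli {Ω E : Type*} [MeasurableSpace Ω] [NormedAddCommGroup E]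
    [NormedSpace ℝ E] [CompleteSpace E] {P : Measure Ω} [IsProbabilityMeasure P] {ξ : Ω → ℝ}
    (hξ : Measurable ξ) (hξval : ∀ ω, ξ ω = 0 ∨ ξ ω = 1) {p : ℝ} (hp : 0 ≤ p)
    (hξp : P {ω | ξ ω = 1} = ENNReal.ofReal p) (φ : ℝ → E) :
    ∫ ω, φ (ξ ω) ∂P = (1 - p) • φ 0 + p • φ 1 := by
  set A := {ω | ξ ω = 1}
  have hφξ : (fun ω => φ (ξ ω)) = fun ω => φ 0 + A.indicator (fun _ => φ 1 - φ 0) ω := by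
    funext ω
    rcases hξval ω with h | h <;> simp [A, h]
  have hAmeas : MeasurableSet A := hξ (measurableSet_singleton 1)
  have hA : P.real A = p := by simp [Measure.real, hξp, hp]
  rw [hφξ, integral_add (integrable_const _) ((integrable_const _).indicator hAmeas),
    integral_indicator_const _ hAmeas, hA]
  simp only [integral_const, probReal_univ, one_smul]
  module

theorem apply_eq_zero_of_prog_le {d : ℕ} {y : EuclideanSpace ℝ (Fin d)} {j : Fin d}
    (h : prog y ≤ j) : y j = 0 := by
  by_contra hyj
  have : (if y j ≠ 0 then (j : ℕ) + 1 else 0) ≤ prog y :=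
    Finset.le_sup (f := fun j : Fin d => if y j ≠ 0 then (j : ℕ) + 1 else 0) (mem_univ j)
  rw [if_pos hyj] at this
  omega

/-- `y` with its coordinates of 1-based index at most `k` set to zero. -/
noncomputable def tailAfter {d : ℕ} (k : ℕ) (y : EuclideanSpace ℝ (Fin d)) :
    EuclideanSpace ℝ (Fin d) :=
  WithLp.toLp 2 (fun j => if k < (j : ℕ) + 1 then y j else 0)

theorem ghat_eq_add_smul_tailAfter {d : ℕ} (f : EuclideanSpace ℝ (Fin d) → ℝ) (p : ℝ)
    (x : EuclideanSpace ℝ (Fin d)) (s : ℝ) :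
    ghat f p x s = gradient f x + (s / p - 1) • tailAfter (prog x) (gradient f x) := by
  ext j
  simp only [ghat, tailAfter, PiLp.add_apply, PiLp.smul_apply, smul_eq_mul]
  split_ifs <;> ring

theorem norm_sq_tailAfter_le {d : ℕ} {k : ℕ} {y : EuclideanSpace ℝ (Fin d)}
    (hy : prog y ≤ k + 1) : ‖tailAfter k y‖ ^ 2 ≤ (⨆ j : Fin d, |y j|) ^ 2 := by
  set S := ⨆ j : Fin d, |y j|
  have hS : ∀ j, ‖y j‖ ^ 2 ≤ S ^ 2 := fun j =>
    pow_le_pow_left₀ (norm_nonneg _) (le_ciSup (Set.finite_range fun j => |y j|).bddAbove j) 2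
  have hterm : ∀ j : Fin d, ‖tailAfter k y j‖ ^ 2 ≤ if (j : ℕ) = k then S ^ 2 else 0 := by
    intro j
    by_cases hkj : k < (j : ℕ) + 1
    · by_cases hjk : (j : ℕ) = k
      · simpa only [tailAfter, if_pos hkj, if_pos hjk] using hS j
      · simp [tailAfter, hjk, apply_eq_zero_of_prog_le (show prog y ≤ j by omega)]
    · simp only [tailAfter, if_neg hkj, if_neg (show (j : ℕ) ≠ k by omega), norm_zero]
      norm_num
  calc ‖tailAfter k y‖ ^ 2 ≤ ∑ j : Fin d, if (j : ℕ) = k then S ^ 2 else 0 := by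
        rw [EuclideanSpace.norm_sq_eq]; exact sum_le_sum fun j _ => hterm j
    _ = if k ∈ range d then S ^ 2 else 0 := by
        rw [Fin.sum_univ_eq_sum_range (fun i => if i = k then S ^ 2 else 0), sum_ite_eq']
    _ ≤ S ^ 2 := by split_ifs <;> [exact le_rfl; positivity]

theorem stmt5_general {d : ℕ}
    (f : EuclideanSpace ℝ (Fin d) → ℝ)
    (p : ℝ) (hp0 : 0 < p) (hp1 : p ≤ 1)
    {Ω : Type*} [MeasurableSpace Ω] (P : Measure Ω) [IsProbabilityMeasure P]
    (ξ : Ω → ℝ) (hξmeas : Measurable ξ)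
    (hξval : ∀ ω, ξ ω = 0 ∨ ξ ω = 1)
    (hξp : P {ω | ξ ω = 1} = ENNReal.ofReal p)
    (x : EuclideanSpace ℝ (Fin d))
    (hzero_chain : prog (gradient f x) ≤ prog x + 1) :
    (∫ ω, ghat f p x (ξ ω) ∂P) = gradient f x ∧
    (∫ ω, ‖ghat f p x (ξ ω) - gradient f x‖^2 ∂P) ≤
      (⨆ j : Fin d, |gradient f x j|)^2 * (1 - p) / p := by
  rw [integral_comp_eq_of_bernoulli hξmeas hξval hp0.le hξp (ghat f p x),
    integral_comp_eq_of_bernoulli hξmeas hξval hp0.le hξp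
      (fun s => ‖ghat f p x s - gradient f x‖ ^ 2)]
  simp only [ghat_eq_add_smul_tailAfter, add_sub_cancel_left, norm_smul, mul_pow,
    Real.norm_eq_abs, sq_abs, smul_eq_mul]
  set v := tailAfter (prog x) (gradient f x)
  have hv : ‖v‖ ^ 2 ≤ (⨆ j : Fin d, |gradient f x j|) ^ 2 := norm_sq_tailAfter_le hzero_chain
  refine ⟨?_, ?_⟩
  · field_simp
    module
  · have hq : 0 ≤ (1 - p) / p := div_nonneg (by linarith) hp0.le
    calc _ = (1 - p) / p * ‖v‖ ^ 2 := by field_simp; ring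
      _ ≤ (1 - p) / p * (⨆ j : Fin d, |gradient f x j|) ^ 2 := by gcongr
      _ = _ := by ring

theorem stmt5 {d : ℕ} (hd : 1 ≤ d)
    (f : EuclideanSpace ℝ (Fin d) → ℝ) (hf : Differentiable ℝ f)
    (p : ℝ) (hp0 : 0 < p) (hp1 : p ≤ 1)
    {Ω : Type*} [MeasurableSpace Ω] (P : Measure Ω) [IsProbabilityMeasure P]
    (ξ : Ω → ℝ) (hξmeas : Measurable ξ)
    (hξval : ∀ ω, ξ ω = 0 ∨ ξ ω = 1)
    (hξp : P {ω | ξ ω = 1} = ENNReal.ofReal p)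
    (x : EuclideanSpace ℝ (Fin d))
    (hzero_chain : prog (gradient f x) ≤ prog x + 1) :
    (∫ ω, ghat f p x (ξ ω) ∂P) = gradient f x ∧
    (∫ ω, ‖ghat f p x (ξ ω) - gradient f x‖^2 ∂P) ≤
      (⨆ j : Fin d, |gradient f x j|)^2 * (1 - p) / p :=
  stmt5_general f p hp0 hp1 P ξ hξmeas hξval hξp x hzero_chain
end

section
/- Let (Ω, F, P) be a probability space, T ≥ 1 a natural number, and X_1,…,X_T nonnegative real-valued random variables. Let t' > 0 and p' ∈ [0,1] be such that for each i ∈ {1,…,T}, the conditional probability satisfies P(X_i ≤ t' ∣ σ(X_1,…,X_{i−1})) ≤ p' almost surely (for i = 1 this means P(X_1 ≤ t') ≤ p'). Then for every real t̂ ≥ 0, P(∑_{i=1}^T X_i ≤ t̂) ≤ exp(t̂/t' − T + 2·p'·T). -/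
/-!
Chernoff's method with parameter `s = -1/t'`. Since `X_i ≥ 0`, pointwise
`exp (-X_i/t') ≤ e⁻¹ + (1 - e⁻¹) 𝟙{X_i ≤ t'}`; conditioning on `X_1, …, X_{i-1}` and pulling
out the (measurable) product of the earlier factors, each factor contributes at most
`e⁻¹ + (1 - e⁻¹) p' ≤ exp (2p' - 1)` to `E[exp (-∑ X_i / t')]`. Markov's inequality turns this
into the bound on the lower tail.
-/

open MeasureTheory ProbabilityTheory Finset Real

lemma exp_mul_le_ite {s x t : ℝ} (hs : s ≤ 0) (hx : 0 ≤ x) :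
    exp (s * x) ≤ (1 - exp (s * t)) * (if x ≤ t then 1 else 0) + exp (s * t) := by
  split_ifs with hxt
  · simpa using exp_le_one_iff.mpr (mul_nonpos_of_nonpos_of_nonneg hs hx)
  · simpa using exp_le_exp.mpr (mul_le_mul_of_nonpos_left (not_le.mp hxt).le hs)

lemma exp_mul_sum_Icc_succ_le {x : ℕ → ℝ} {s t : ℝ} {n : ℕ} (hs : s ≤ 0) (hx : 0 ≤ x (n + 1)) :
    exp (s * ∑ i ∈ Icc 1 (n + 1), x i) ≤
      (1 - exp (s * t)) * (exp (s * ∑ i ∈ Icc 1 n, x i) * if x (n + 1) ≤ t then 1 else 0) +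
        exp (s * t) * exp (s * ∑ i ∈ Icc 1 n, x i) := by
  rw [sum_Icc_succ_top (by omega), mul_add, exp_add]
  nlinarith [mul_le_mul_of_nonneg_left (exp_mul_le_ite (t := t) hs hx)
    (exp_pos (s * ∑ i ∈ Icc 1 n, x i)).le]

lemma zero_le_one_sub_exp_mul_add_exp {s t p : ℝ} (hs : s ≤ 0) (ht : 0 ≤ t) (hp : 0 ≤ p) :
    0 ≤ (1 - exp (s * t)) * p + exp (s * t) := by
  have := exp_le_one_iff.mpr (mul_nonpos_of_nonpos_of_nonneg hs ht)
  nlinarith [exp_pos (s * t)]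

lemma one_sub_exp_neg_one_mul_add_exp_neg_one_le {p : ℝ} (hp : 0 ≤ p) :
    (1 - exp (-1)) * p + exp (-1) ≤ exp (2 * p - 1) := by
  have he : 1 ≤ 3 * exp (-1) := by
    rw [exp_neg, ← div_eq_mul_inv, one_le_div (exp_pos 1)]
    exact exp_one_lt_three.le
  have hexp : exp (2 * p - 1) = exp (-1) * exp (2 * p) := by
    rw [← exp_add]; ring_nf
  rw [hexp]
  nlinarith [add_one_le_exp (2 * p), exp_pos (-1)]

lemma integral_mul_le_of_condExp_le {Ω : Type*} {m m₀ : MeasurableSpace Ω} {μ : Measure Ω}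
    [IsFiniteMeasure μ] (hm : m ≤ m₀) {f g : Ω → ℝ} {c : ℝ} (hg : StronglyMeasurable[m] g)
    (hg0 : 0 ≤ᵐ[μ] g) (hgi : Integrable g μ) (hf : Integrable f μ)
    (hgf : Integrable (g * f) μ) (hfc : μ[f | m] ≤ᵐ[μ] fun _ => c) :
    ∫ ω, (g * f) ω ∂μ ≤ c * ∫ ω, g ω ∂μ := by
  have hpull : μ[g * f | m] =ᵐ[μ] g * μ[f | m] :=
    condExp_mul_of_stronglyMeasurable_left hg hgf hf
  calc ∫ ω, (g * f) ω ∂μ = ∫ ω, (g * μ[f | m]) ω ∂μ := by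
        rw [← integral_condExp hm, integral_congr_ae hpull]
    _ ≤ ∫ ω, c * g ω ∂μ := by
        refine integral_mono_ae (integrable_condExp.congr hpull) (hgi.const_mul c) ?_
        filter_upwards [hfc, hg0] with ω hω hgω
        simpa [mul_comm c] using mul_le_mul_of_nonneg_left hω hgω
    _ = c * ∫ ω, g ω ∂μ := integral_const_mul c _

section Chernoff

variable {Ω : Type*}

/-- `σ(X_1, …, X_n)`. -/
abbrev sigmaFirst (X : ℕ → Ω → ℝ) (n : ℕ) : MeasurableSpace Ω :=
  MeasurableSpace.comap (fun ω (j : Fin n) => X ((j : ℕ) + 1) ω) inferInstance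

variable {X : ℕ → Ω → ℝ}

lemma measurable_sigmaFirst {i n : ℕ} (hi : 1 ≤ i) (hin : i ≤ n) :
    Measurable[sigmaFirst X n] (X i) := by
  obtain ⟨k, rfl⟩ : ∃ k, i = k + 1 := ⟨i - 1, by omega⟩
  exact (measurable_pi_apply (X := fun _ : Fin n => ℝ) ⟨k, by omega⟩).comp
    (comap_measurable _)

variable [mΩ : MeasurableSpace Ω] {P : Measure Ω} {s t p : ℝ}

lemma sigmaFirst_le (hX : ∀ i, Measurable (X i)) (n : ℕ) : sigmaFirst X n ≤ mΩ :=
  (measurable_pi_lambda _ fun _ => hX _).comap_le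

lemma integrable_exp_mul_of_nonneg {μ : Measure Ω} [IsFiniteMeasure μ]
    {Y : Ω → ℝ} (hY : Measurable Y) (hY0 : ∀ ω, 0 ≤ Y ω) (hs : s ≤ 0) :
    Integrable (fun ω => exp (s * Y ω)) μ := by
  refine (integrable_const (1 : ℝ)).mono' (hY.const_mul s).exp.aestronglyMeasurable
    (.of_forall fun ω => ?_)
  rw [norm_of_nonneg (exp_pos _).le, exp_le_one_iff]
  exact mul_nonpos_of_nonpos_of_nonneg hs (hY0 ω)

lemma integral_exp_mul_sum_Icc_succ_le [IsFiniteMeasure P] (hXmeas : ∀ i, Measurable (X i))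
    (hX0 : ∀ i ω, 0 ≤ X i ω) (hs : s ≤ 0) (ht : 0 ≤ t) (n : ℕ)
    (hcond : P[{ω | X (n + 1) ω ≤ t}.indicator (fun _ => (1 : ℝ)) | sigmaFirst X n]
      ≤ᵐ[P] fun _ => p) :
    ∫ ω, exp (s * ∑ i ∈ Icc 1 (n + 1), X i ω) ∂P ≤
      ((1 - exp (s * t)) * p + exp (s * t)) * ∫ ω, exp (s * ∑ i ∈ Icc 1 n, X i ω) ∂P := by
  set G : Ω → ℝ := fun ω => exp (s * ∑ i ∈ Icc 1 n, X i ω)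
  set ind : Ω → ℝ := {ω | X (n + 1) ω ≤ t}.indicator (fun _ => 1)
  set e := exp (s * t)
  have hsum_meas : ∀ k, Measurable fun ω => ∑ i ∈ Icc 1 k, X i ω :=
    fun k => Finset.measurable_sum _ fun i _ => hXmeas i
  have hsum_nonneg : ∀ k ω, 0 ≤ ∑ i ∈ Icc 1 k, X i ω :=
    fun k ω => Finset.sum_nonneg fun i _ => hX0 i ω
  have hGi : Integrable G P := integrable_exp_mul_of_nonneg (hsum_meas n) (hsum_nonneg n) hs
  have hind_meas : Measurable ind :=
    measurable_const.indicator (measurableSet_le (hXmeas _) measurable_const)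
  have hind_bdd : ∀ ω, ‖ind ω‖ ≤ 1 := fun ω =>
    (norm_indicator_le_norm_self (fun _ => (1 : ℝ)) ω).trans norm_one.le
  have hindi : Integrable ind P :=
    (integrable_const (1 : ℝ)).mono' hind_meas.aestronglyMeasurable (.of_forall hind_bdd)
  have hGindi : Integrable (G * ind) P :=
    hGi.mul_bdd hind_meas.aestronglyMeasurable (.of_forall hind_bdd)
  have hG_past : StronglyMeasurable[sigmaFirst X n] G :=
    ((Finset.measurable_sum _ fun i hi => measurable_sigmaFirst (mem_Icc.mp hi).1
      (mem_Icc.mp hi).2).const_mul s).exp.stronglyMeasurable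
  have hpast : ∫ ω, (G * ind) ω ∂P ≤ p * ∫ ω, G ω ∂P :=
    integral_mul_le_of_condExp_le (sigmaFirst_le hXmeas n) hG_past
      (.of_forall fun ω => (exp_pos _).le) hGi hindi hGindi hcond
  have hpointwise :
      ∀ ω, exp (s * ∑ i ∈ Icc 1 (n + 1), X i ω) ≤ (1 - e) * (G * ind) ω + e * G ω := by
    intro ω
    simpa only [Pi.mul_apply, ind, G, Set.indicator_apply, Set.mem_ofPred_eq]
      using exp_mul_sum_Icc_succ_le (t := t) hs (hX0 (n + 1) ω)
  have he : e ≤ 1 := exp_le_one_iff.mpr (mul_nonpos_of_nonpos_of_nonneg hs ht)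
  calc ∫ ω, exp (s * ∑ i ∈ Icc 1 (n + 1), X i ω) ∂P
      ≤ ∫ ω, ((1 - e) * (G * ind) ω + e * G ω) ∂P :=
        integral_mono (integrable_exp_mul_of_nonneg (hsum_meas _) (hsum_nonneg _) hs)
          ((hGindi.const_mul _).add (hGi.const_mul _)) hpointwise
    _ = (1 - e) * ∫ ω, (G * ind) ω ∂P + e * ∫ ω, G ω ∂P := by
        rw [integral_add (hGindi.const_mul _) (hGi.const_mul _), integral_const_mul,
          integral_const_mul]
    _ ≤ ((1 - e) * p + e) * ∫ ω, G ω ∂P := by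
        nlinarith [mul_le_mul_of_nonneg_left hpast (sub_nonneg.mpr he)]

lemma mgf_sum_Icc_le_pow [IsProbabilityMeasure P] (hXmeas : ∀ i, Measurable (X i))
    (hX0 : ∀ i ω, 0 ≤ X i ω) (hs : s ≤ 0) (ht : 0 ≤ t) (hp : 0 ≤ p) (T : ℕ)
    (hcond : ∀ n < T, P[{ω | X (n + 1) ω ≤ t}.indicator (fun _ => (1 : ℝ)) | sigmaFirst X n]
      ≤ᵐ[P] fun _ => p) :
    mgf (fun ω => ∑ i ∈ Icc 1 T, X i ω) P s ≤ ((1 - exp (s * t)) * p + exp (s * t)) ^ T := by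
  have hc := zero_le_one_sub_exp_mul_add_exp hs ht hp
  induction T with
  | zero => simp [mgf]
  | succ n ih =>
    calc mgf (fun ω => ∑ i ∈ Icc 1 (n + 1), X i ω) P s
        ≤ ((1 - exp (s * t)) * p + exp (s * t)) * mgf (fun ω => ∑ i ∈ Icc 1 n, X i ω) P s :=
          integral_exp_mul_sum_Icc_succ_le hXmeas hX0 hs ht n (hcond n n.lt_succ_self)
      _ ≤ ((1 - exp (s * t)) * p + exp (s * t)) ^ (n + 1) := by
          rw [pow_succ']
          exact mul_le_mul_of_nonneg_left (ih fun k hk => hcond k (by omega)) hc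

end Chernoff

theorem stmt6_general {Ω : Type*} [MeasurableSpace Ω] (P : Measure Ω) [IsProbabilityMeasure P]
    (T : ℕ) (X : ℕ → Ω → ℝ)
    (hXmeas : ∀ i, Measurable (X i))
    (hXnonneg : ∀ i ω, 0 ≤ X i ω)
    (t' : ℝ) (ht' : 0 < t') (p' : ℝ) (hp'0 : 0 ≤ p')
    (hcond : ∀ i, 1 ≤ i → i ≤ T →
      P[(Set.indicator {ω | X i ω ≤ t'} (fun _ => (1 : ℝ))) |
          MeasurableSpace.comap (fun ω (j : Fin (i - 1)) => X ((j : ℕ) + 1) ω) inferInstance]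
        ≤ᵐ[P] fun _ => p') :
    ∀ that : ℝ, 0 ≤ that →
      P {ω | ∑ i ∈ Finset.Icc 1 T, X i ω ≤ that} ≤
        ENNReal.ofReal (Real.exp (that / t' - T + 2 * p' * T)) := by
  intro that _
  have hs : -1 / t' ≤ 0 := div_nonpos_of_nonpos_of_nonneg (by norm_num) ht'.le
  have hst : -1 / t' * t' = -1 := div_mul_cancel₀ _ ht'.ne'
  have hmgf := mgf_sum_Icc_le_pow hXmeas hXnonneg hs ht'.le hp'0 T
    fun n hn => hcond (n + 1) (by omega) hn
  have hc := zero_le_one_sub_exp_mul_add_exp hs ht'.le hp'0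
  rw [hst] at hmgf hc
  have hint := integrable_exp_mul_of_nonneg (μ := P)
    (Finset.measurable_sum (Icc 1 T) fun i _ => hXmeas i)
    (fun ω => Finset.sum_nonneg fun i _ => hXnonneg i ω) hs
  rw [ENNReal.le_ofReal_iff_toReal_le (measure_ne_top P _) (exp_pos _).le, ← measureReal_def]
  calc P.real {ω | ∑ i ∈ Icc 1 T, X i ω ≤ that}
      ≤ exp (-(-1 / t') * that) * mgf (fun ω => ∑ i ∈ Icc 1 T, X i ω) P (-1 / t') :=
        measure_le_le_exp_mul_mgf that hs hint
    _ ≤ exp (that / t') * exp (2 * p' - 1) ^ T := by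
        rw [show -(-1 / t') * that = that / t' by ring]
        gcongr
        exact hmgf.trans (pow_le_pow_left₀ hc
          (one_sub_exp_neg_one_mul_add_exp_neg_one_le hp'0) T)
    _ = exp (that / t' - T + 2 * p' * T) := by
        rw [← exp_nat_mul, ← exp_add]
        ring_nf

theorem stmt6 {Ω : Type*} [MeasurableSpace Ω] (P : Measure Ω) [IsProbabilityMeasure P]
    (T : ℕ) (hT : 1 ≤ T) (X : ℕ → Ω → ℝ)
    (hXmeas : ∀ i, Measurable (X i))
    (hXnonneg : ∀ i ω, 0 ≤ X i ω)
    (t' : ℝ) (ht' : 0 < t') (p' : ℝ) (hp'0 : 0 ≤ p') (hp'1 : p' ≤ 1)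
    (hcond : ∀ i, 1 ≤ i → i ≤ T →
      P[(Set.indicator {ω | X i ω ≤ t'} (fun _ => (1 : ℝ))) |
          MeasurableSpace.comap (fun ω (j : Fin (i - 1)) => X ((j : ℕ) + 1) ω) inferInstance]
        ≤ᵐ[P] fun _ => p') :
    ∀ that : ℝ, 0 ≤ that →
      P {ω | ∑ i ∈ Finset.Icc 1 T, X i ω ≤ that} ≤
        ENNReal.ofReal (Real.exp (that / t' - T + 2 * p' * T)) :=
  stmt6_general P T X hXmeas hXnonneg t' ht' p' hp'0 hcond
end

section
/- Let f : ℝ^d → ℝ be L-smooth (L > 0) and bounded below by f* ∈ ℝ, let x⁰ ∈ ℝ^d, and set Δ = f(x⁰) − f*. Let σ² > 0 and ε > 0. Let G be a stochastic gradient oracle for f with variance σ² on a probability space (Ω, P), and let ξ⁰, ξ¹, ξ², … be an i.i.d. sequence of Ω-valued random elements. Define the stochastic gradient descent iterates x^{k+1} = x^k − γ·G(x^k, ξ^k) with stepsize γ = min{1/L, ε/(2Lσ²)}. Then for every natural number K ≥ 4ΔL/ε + 8ΔLσ²/ε², we have (1/K)·∑_{k=0}^{K−1} E[‖∇f(x^k)‖²]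 ≤ ε. -/
/-!
By the descent lemma `f (x - γ g) ≤ f x - γ ⟪∇f x, g⟫ + L γ² / 2 ‖g‖²`, averaging over a fresh
oracle sample (unbiasedness and `E ‖G x‖² ≤ σ² + ‖∇f x‖²`) and using `γ L ≤ 1` gives
`E f(x^{k+1}) ≤ E f(x^k) - γ/2 E ‖∇f(x^k)‖² + L γ² σ² / 2`. The iterate `x^k` is a measurable
function of `ξ⁰, …, ξ^{k-1}`, hence independent of `ξ^k`, so the law of `(x^k, ξ^k)` is a product
and Fubini reduces the random step to the deterministic one; finite second moments of the iterates,
propagated by induction, keep every expectation finite. Telescoping and `f ≥ f*` give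
`(1/K) ∑ E ‖∇f(x^k)‖² ≤ 2Δ/(γK) + L γ σ²`, and the choices of `γ` and `K` bound each term by `ε/2`.
-/

open MeasureTheory ProbabilityTheory Finset

section Smooth

variable {E : Type*} [NormedAddCommGroup E] [InnerProductSpace ℝ E] [CompleteSpace E]
  {f : E → ℝ} {L : ℝ}

theorem continuous_gradient_of_lipschitz
    (hL : ∀ x y, ‖gradient f x - gradient f y‖ ≤ L * ‖x - y‖) :
    Continuous (gradient f) :=
  (LipschitzWith.of_dist_le' fun x y => by simpa only [dist_eq_norm] using hL x y).continuous

theorem norm_gradient_le_add_mul_norm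
    (hL : ∀ x y, ‖gradient f x - gradient f y‖ ≤ L * ‖x - y‖) (y : E) :
    ‖gradient f y‖ ≤ ‖gradient f 0‖ + L * ‖y‖ := by
  have := norm_sub_norm_le (gradient f y) (gradient f 0)
  linarith [sub_zero y ▸ hL y 0]

theorem abs_sub_sub_inner_gradient_le (hf : Differentiable ℝ f)
    (hL : ∀ x y, ‖gradient f x - gradient f y‖ ≤ L * ‖x - y‖) (x y : E) :
    |f y - f x - inner ℝ (gradient f x) (y - x)| ≤ L / 2 * ‖y - x‖ ^ 2 := by
  set v := y - x
  set g : ℝ → ℝ := fun t => f (x + t • v) - f x - t * inner ℝ (gradient f x) v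
  have hg : ∀ t, HasDerivAt g (inner ℝ (gradient f (x + t • v) - gradient f x) v) t := by
    intro t
    have hline : HasDerivAt (fun t : ℝ => x + t • v) v t := by
      simpa using ((hasDerivAt_id t).smul_const v).const_add x
    have := (((hf _).hasGradientAt.hasFDerivAt.comp_hasDerivAt t hline).sub_const (f x)).sub
      ((hasDerivAt_id t).mul_const (inner ℝ (gradient f x) v))
    exact this.congr_deriv (by simp [inner_sub_left])
  have hB : ∀ t : ℝ, HasDerivAt (fun t => L / 2 * t ^ 2 * ‖v‖ ^ 2) (L * t * ‖v‖ ^ 2) t := fun t =>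
    (((hasDerivAt_pow 2 t).const_mul (L / 2)).mul_const (‖v‖ ^ 2)).congr_deriv (by push_cast; ring)
  have bound : ∀ t ∈ Set.Ico (0 : ℝ) 1,
      ‖inner ℝ (gradient f (x + t • v) - gradient f x) v‖ ≤ L * t * ‖v‖ ^ 2 := by
    rintro t ⟨ht, -⟩
    calc ‖inner ℝ (gradient f (x + t • v) - gradient f x) v‖
        ≤ ‖gradient f (x + t • v) - gradient f x‖ * ‖v‖ := norm_inner_le_norm _ _
      _ ≤ L * ‖x + t • v - x‖ * ‖v‖ := by gcongr; exact hL _ _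
      _ = L * t * ‖v‖ ^ 2 := by
        rw [add_sub_cancel_left, norm_smul, Real.norm_of_nonneg ht]; ring
  simpa [g, v] using image_norm_le_of_norm_deriv_right_le_deriv_boundary
    (fun t _ => (hg t).continuousAt.continuousWithinAt) (fun t _ => (hg t).hasDerivWithinAt)
    (by simp [g]) hB bound (Set.right_mem_Icc.2 zero_le_one)

theorem apply_sub_smul_le (hf : Differentiable ℝ f)
    (hL : ∀ x y, ‖gradient f x - gradient f y‖ ≤ L * ‖x - y‖) (x w : E) (γ : ℝ) :
    f (x - γ • w) ≤ f x - γ * inner ℝ (gradient f x) w + L / 2 * γ ^ 2 * ‖w‖ ^ 2 := by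
  have := (abs_le.1 (abs_sub_sub_inner_gradient_le hf hL x (x - γ • w))).2
  rw [sub_sub_cancel_left, inner_neg_right, real_inner_smul_right, norm_neg, norm_smul,
    mul_pow, Real.norm_eq_abs, sq_abs] at this
  linarith

theorem abs_apply_le_quadratic (hf : Differentiable ℝ f)
    (hL : ∀ x y, ‖gradient f x - gradient f y‖ ≤ L * ‖x - y‖) (y : E) :
    |f y| ≤ |f 0| + ‖gradient f 0‖ * ‖y‖ + L / 2 * ‖y‖ ^ 2 := by
  have h := abs_sub_sub_inner_gradient_le hf hL 0 y
  rw [sub_zero] at h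
  have := abs_real_inner_le_norm (gradient f 0) y
  have := abs_add_three (f y - f 0 - inner ℝ (gradient f 0) y) (f 0) (inner ℝ (gradient f 0) y)
  rw [show f y - f 0 - inner ℝ (gradient f 0) y + f 0 + inner ℝ (gradient f 0) y = f y by ring]
    at this
  linarith

variable {α : Type*} [MeasurableSpace α] {ν : Measure α} [IsFiniteMeasure ν] {Z : α → E}

theorem integrable_comp_of_memLp_two (hf : Differentiable ℝ f)
    (hL : ∀ x y, ‖gradient f x - gradient f y‖ ≤ L * ‖x - y‖) (hZ : MemLp Z 2 ν) :
    Integrable (fun a => f (Z a)) ν := by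
  have hbound : Integrable (fun a => |f 0| + ‖gradient f 0‖ * ‖Z a‖ + L / 2 * ‖Z a‖ ^ 2) ν :=
    ((integrable_const _).add ((hZ.integrable one_le_two).norm.const_mul _)).add
      (((memLp_two_iff_integrable_sq_norm hZ.1).1 hZ).const_mul _)
  exact hbound.mono' (hf.continuous.comp_aestronglyMeasurable hZ.1)
    (ae_of_all _ fun a => abs_apply_le_quadratic hf hL (Z a))

theorem memLp_two_gradient_comp (hL : ∀ x y, ‖gradient f x - gradient f y‖ ≤ L * ‖x - y‖)
    (hZ : MemLp Z 2 ν) : MemLp (fun a => gradient f (Z a)) 2 ν := by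
  have hbound : MemLp (fun a => ‖gradient f 0‖ + L * ‖Z a‖) 2 ν :=
    (memLp_const ‖gradient f 0‖).add (hZ.norm.const_mul L)
  have hm : AEStronglyMeasurable (fun a => gradient f (Z a)) ν :=
    (continuous_gradient_of_lipschitz hL).comp_aestronglyMeasurable hZ.1
  have hb : ∀ᵐ a ∂ν, ‖gradient f (Z a)‖ ≤ ‖gradient f 0‖ + L * ‖Z a‖ :=
    ae_of_all _ fun a => norm_gradient_le_add_mul_norm hL (Z a)
  exact hbound.mono' hm hb

end Smooth

section Oracle

variable {E : Type*} [NormedAddCommGroup E] [InnerProductSpace ℝ E] [CompleteSpace E]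
  [MeasurableSpace E] {Ω : Type*} [MeasurableSpace Ω]

structure IsStochasticGradient (f : E → ℝ) (P : Measure Ω) (G : E → Ω → E) (σ2 : ℝ) : Prop where
  measurable : Measurable fun q : E × Ω => G q.1 q.2
  integrable : ∀ x, Integrable (G x) P
  integrable_sq_dev : ∀ x, Integrable (fun ω => ‖G x ω - gradient f x‖ ^ 2) P
  integral_eq : ∀ x, ∫ ω, G x ω ∂P = gradient f x
  variance_le : ∀ x, ∫ ω, ‖G x ω - gradient f x‖ ^ 2 ∂P ≤ σ2

namespace IsStochasticGradient

variable {f : E → ℝ} {L : ℝ} {P : Measure Ω} {G : E → Ω → E} {σ2 : ℝ}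

theorem integral_inner_eq (hG : IsStochasticGradient f P G σ2) (x : E) :
    ∫ ω, inner ℝ (gradient f x) (G x ω) ∂P = ‖gradient f x‖ ^ 2 := by
  rw [integral_inner (hG.integrable x), hG.integral_eq x, real_inner_self_eq_norm_sq]

variable [BorelSpace E] [SecondCountableTopology E]

theorem measurable_sgd_step (hG : IsStochasticGradient f P G σ2) (γ : ℝ) :
    Measurable fun q : E × Ω => q.1 - γ • G q.1 q.2 :=
  measurable_fst.sub (hG.measurable.const_smul γ)

variable [IsProbabilityMeasure P]

theorem memLp_two (hG : IsStochasticGradient f P G σ2) (x : E) : MemLp (G x) 2 P := by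
  have hm : AEStronglyMeasurable (G x) P :=
    (hG.measurable.comp measurable_prodMk_left).aestronglyMeasurable
  have hdev : MemLp (fun ω => G x ω - gradient f x) 2 P :=
    (memLp_two_iff_integrable_sq_norm (hm.sub aestronglyMeasurable_const)).2
      (hG.integrable_sq_dev x)
  convert hdev.add (memLp_const (gradient f x)) using 1
  ext1 ω
  simp

theorem integrable_norm_sq (hG : IsStochasticGradient f P G σ2) (x : E) :
    Integrable (fun ω => ‖G x ω‖ ^ 2) P :=
  (memLp_two_iff_integrable_sq_norm (hG.memLp_two x).1).1 (hG.memLp_two x)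

theorem integral_norm_sq_le (hG : IsStochasticGradient f P G σ2) (x : E) :
    ∫ ω, ‖G x ω‖ ^ 2 ∂P ≤ σ2 + ‖gradient f x‖ ^ 2 := by
  set g := gradient f x
  have hinner : Integrable (fun ω => inner ℝ g (G x ω)) P := (hG.integrable x).const_inner g
  have hsub : Integrable (fun ω => ‖G x ω‖ ^ 2 - 2 * inner ℝ g (G x ω)) P :=
    (hG.integrable_norm_sq x).sub (hinner.const_mul 2)
  have hexpand : ∫ ω, ‖G x ω - g‖ ^ 2 ∂P = ∫ ω, ‖G x ω‖ ^ 2 ∂P - ‖g‖ ^ 2 := by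
    simp_rw [norm_sub_sq_real, real_inner_comm g]
    rw [integral_add hsub (integrable_const _),
      integral_sub (hG.integrable_norm_sq x) (hinner.const_mul 2), integral_const_mul,
      hG.integral_inner_eq x]
    simp only [integral_const, probReal_univ, one_smul]
    ring
  linarith [hG.variance_le x]

theorem integral_apply_sub_smul_le (hG : IsStochasticGradient f P G σ2)
    (hf : Differentiable ℝ f) (hL : ∀ x y, ‖gradient f x - gradient f y‖ ≤ L * ‖x - y‖)
    (hL0 : 0 ≤ L) {γ : ℝ} (hγ0 : 0 ≤ γ) (hγL : γ * L ≤ 1) (x : E) :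
    ∫ ω, f (x - γ • G x ω) ∂P ≤ f x - γ / 2 * ‖gradient f x‖ ^ 2 + L * γ ^ 2 / 2 * σ2 := by
  have hint : Integrable (fun ω => f (x - γ • G x ω)) P :=
    integrable_comp_of_memLp_two hf hL ((memLp_const x).sub ((hG.memLp_two x).const_smul γ))
  have hinner : Integrable (fun ω => inner ℝ (gradient f x) (G x ω)) P :=
    (hG.integrable x).const_inner _
  have hlin : Integrable (fun ω => f x - γ * inner ℝ (gradient f x) (G x ω)) P :=
    (integrable_const _).sub (hinner.const_mul γ)
  have hrhs : Integrable
      (fun ω => f x - γ * inner ℝ (gradient f x) (G x ω) + L / 2 * γ ^ 2 * ‖G x ω‖ ^ 2) P :=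
    hlin.add ((hG.integrable_norm_sq x).const_mul _)
  calc ∫ ω, f (x - γ • G x ω) ∂P
      ≤ ∫ ω, (f x - γ * inner ℝ (gradient f x) (G x ω) + L / 2 * γ ^ 2 * ‖G x ω‖ ^ 2) ∂P :=
        integral_mono hint hrhs fun ω => apply_sub_smul_le hf hL x (G x ω) γ
    _ = f x - γ * ‖gradient f x‖ ^ 2 + L / 2 * γ ^ 2 * ∫ ω, ‖G x ω‖ ^ 2 ∂P := by
        rw [integral_add hlin ((hG.integrable_norm_sq x).const_mul _),
          integral_sub (integrable_const _) (hinner.const_mul γ), integral_const_mul,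
          integral_const_mul, hG.integral_inner_eq x]
        simp only [integral_const, probReal_univ, one_smul]
    _ ≤ f x - γ * ‖gradient f x‖ ^ 2 + L / 2 * γ ^ 2 * (σ2 + ‖gradient f x‖ ^ 2) := by
        gcongr
        exact hG.integral_norm_sq_le x
    _ ≤ f x - γ / 2 * ‖gradient f x‖ ^ 2 + L * γ ^ 2 / 2 * σ2 := by
        nlinarith [mul_le_mul_of_nonneg_left hγL (mul_nonneg hγ0 (sq_nonneg ‖gradient f x‖))]

end IsStochasticGradient

end Oracle

section Step

variable {E : Type*} [NormedAddCommGroup E] [InnerProductSpace ℝ E] [CompleteSpace E]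
  [MeasurableSpace E] [BorelSpace E]
  {Ω : Type*} [MeasurableSpace Ω] {P : Measure Ω} [IsProbabilityMeasure P]
  {Ω' : Type*} [MeasurableSpace Ω'] {Q : Measure Ω'} [IsProbabilityMeasure Q]
  {f : E → ℝ} {L : ℝ} {G : E → Ω → E} {σ2 : ℝ} {X : Ω' → E} {Y : Ω' → Ω}

theorem integrable_norm_gradient_sq_map
    (hL : ∀ x y, ‖gradient f x - gradient f y‖ ≤ L * ‖x - y‖) (hX : Measurable X)
    (hX2 : MemLp X 2 Q) : Integrable (fun v => ‖gradient f v‖ ^ 2) (Q.map X) := by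
  have h := memLp_two_gradient_comp hL hX2
  rw [integrable_map_measure (g := fun v => ‖gradient f v‖ ^ 2)
    ((continuous_gradient_of_lipschitz hL).norm.pow 2).aestronglyMeasurable hX.aemeasurable]
  exact (memLp_two_iff_integrable_sq_norm h.1).1 h

variable [SecondCountableTopology E]

namespace IsStochasticGradient

theorem memLp_two_comp (hG : IsStochasticGradient f P G σ2)
    (hL : ∀ x y, ‖gradient f x - gradient f y‖ ≤ L * ‖x - y‖) (hX : Measurable X)
    (hY : Measurable Y) (hXY : IndepFun X Y Q) (hYlaw : Q.map Y = P) (hX2 : MemLp X 2 Q) :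
    MemLp (fun ω => G (X ω) (Y ω)) 2 Q := by
  have : IsProbabilityMeasure (Q.map X) := Measure.isProbabilityMeasure_map hX.aemeasurable
  have hpair : Q.map (fun ω => (X ω, Y ω)) = (Q.map X).prod P :=
    hYlaw ▸ hXY.map_prod_eq_prod_map_map hX.aemeasurable hY.aemeasurable
  have hm : AEStronglyMeasurable (fun q : E × Ω => ‖G q.1 q.2‖ ^ 2) ((Q.map X).prod P) :=
    (hG.measurable.norm.pow_const 2).aestronglyMeasurable
  have hprod : Integrable (fun q : E × Ω => ‖G q.1 q.2‖ ^ 2) ((Q.map X).prod P) := by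
    refine (integrable_prod_iff hm).2 ⟨ae_of_all _ hG.integrable_norm_sq, ?_⟩
    refine ((integrable_const σ2).add (integrable_norm_gradient_sq_map hL hX hX2)).mono'
      hm.norm.integral_prod_right' (ae_of_all _ fun v => ?_)
    simp only [norm_pow, Real.norm_eq_abs, sq_abs]
    rw [abs_of_nonneg (integral_nonneg fun ω => sq_nonneg _)]
    exact hG.integral_norm_sq_le v
  rw [← hpair] at hm hprod
  exact (memLp_two_iff_integrable_sq_norm
    (hG.measurable.comp (hX.prodMk hY)).aestronglyMeasurable).2
    ((integrable_map_measure hm (hX.prodMk hY).aemeasurable).1 hprod)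

theorem integral_apply_sub_smul_comp_le (hG : IsStochasticGradient f P G σ2)
    (hf : Differentiable ℝ f) (hL : ∀ x y, ‖gradient f x - gradient f y‖ ≤ L * ‖x - y‖)
    (hL0 : 0 ≤ L) {γ : ℝ} (hγ0 : 0 ≤ γ) (hγL : γ * L ≤ 1) (hX : Measurable X)
    (hY : Measurable Y) (hXY : IndepFun X Y Q) (hYlaw : Q.map Y = P) (hX2 : MemLp X 2 Q) :
    ∫ ω, f (X ω - γ • G (X ω) (Y ω)) ∂Q ≤
      ∫ ω, f (X ω) ∂Q - γ / 2 * ∫ ω, ‖gradient f (X ω)‖ ^ 2 ∂Q + L * γ ^ 2 / 2 * σ2 := by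
  have : IsProbabilityMeasure (Q.map X) := Measure.isProbabilityMeasure_map hX.aemeasurable
  have hpair : Q.map (fun ω => (X ω, Y ω)) = (Q.map X).prod P :=
    hYlaw ▸ hXY.map_prod_eq_prod_map_map hX.aemeasurable hY.aemeasurable
  set φ : E × Ω → ℝ := fun q => f (q.1 - γ • G q.1 q.2)
  have hφm : AEStronglyMeasurable φ (Q.map fun ω => (X ω, Y ω)) :=
    (hf.continuous.measurable.comp (hG.measurable_sgd_step γ)).aestronglyMeasurable
  have hφ : Integrable φ ((Q.map X).prod P) := by
    rw [← hpair, integrable_map_measure hφm (hX.prodMk hY).aemeasurable]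
    exact integrable_comp_of_memLp_two (f := f) hf hL
      (hX2.sub ((hG.memLp_two_comp hL hX hY hXY hYlaw hX2).const_smul γ))
  have hfX : Integrable f (Q.map X) := by
    rw [integrable_map_measure hf.continuous.aestronglyMeasurable hX.aemeasurable]
    exact integrable_comp_of_memLp_two (f := f) hf hL hX2
  have hgX := integrable_norm_gradient_sq_map hL hX hX2
  have hdescent : Integrable (fun v => f v - γ / 2 * ‖gradient f v‖ ^ 2) (Q.map X) :=
    hfX.sub (hgX.const_mul _)
  calc ∫ ω, f (X ω - γ • G (X ω) (Y ω)) ∂Q = ∫ q, φ q ∂((Q.map X).prod P) := by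
        rw [← hpair, integral_map (hX.prodMk hY).aemeasurable hφm]
    _ = ∫ v, ∫ ω, φ (v, ω) ∂P ∂(Q.map X) := integral_prod φ hφ
    _ ≤ ∫ v, (f v - γ / 2 * ‖gradient f v‖ ^ 2 + L * γ ^ 2 / 2 * σ2) ∂(Q.map X) :=
        integral_mono hφ.integral_prod_left (hdescent.add (integrable_const _))
          fun v => hG.integral_apply_sub_smul_le hf hL hL0 hγ0 hγL v
    _ = ∫ v, f v ∂(Q.map X) - γ / 2 * ∫ v, ‖gradient f v‖ ^ 2 ∂(Q.map X)
          + L * γ ^ 2 / 2 * σ2 := by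
        rw [integral_add hdescent (integrable_const _), integral_sub hfX (hgX.const_mul _),
          integral_const_mul]
        simp only [integral_const, probReal_univ, one_smul]
    _ = _ := by
        rw [integral_map hX.aemeasurable hf.continuous.aestronglyMeasurable,
          integral_map hX.aemeasurable hgX.1]

end IsStochasticGradient

end Step

section Recursion

variable {Ω : Type*} {mΩ : MeasurableSpace Ω} {Ω' : Type*} {mΩ' : MeasurableSpace Ω'}
  {β : Type*} [MeasurableSpace β] {ξ : ℕ → Ω' → Ω} {Φ : β → Ω → β} {x : ℕ → Ω' → β}

theorem measurable_iSup_comap_of_recursion (hΦ : Measurable fun q : β × Ω => Φ q.1 q.2)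
    {x₀ : β} (hx0 : ∀ ω, x 0 ω = x₀) (hrec : ∀ k ω, x (k + 1) ω = Φ (x k ω) (ξ k ω)) (k : ℕ) :
    Measurable[⨆ i ∈ Set.Iio k, mΩ.comap (ξ i)] (x k) := by
  induction k with
  | zero =>
    rw [funext hx0]
    exact measurable_const
  | succ k ih =>
    have hmono : ⨆ i ∈ Set.Iio k, mΩ.comap (ξ i) ≤ ⨆ i ∈ Set.Iio (k + 1), mΩ.comap (ξ i) :=
      biSup_mono fun i hi => hi.trans k.lt_succ_self
    have hξ : Measurable[⨆ i ∈ Set.Iio (k + 1), mΩ.comap (ξ i)] (ξ k) :=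
      (comap_measurable (ξ k)).mono
        (le_iSup₂ (f := fun i (_ : i ∈ Set.Iio (k + 1)) => mΩ.comap (ξ i)) k k.lt_succ_self)
        le_rfl
    rw [funext (hrec k)]
    exact hΦ.comp ((ih.mono hmono le_rfl).prodMk hξ)

theorem measurable_of_recursion (hΦ : Measurable fun q : β × Ω => Φ q.1 q.2)
    (hξ : ∀ k, Measurable (ξ k)) {x₀ : β} (hx0 : ∀ ω, x 0 ω = x₀)
    (hrec : ∀ k ω, x (k + 1) ω = Φ (x k ω) (ξ k ω)) (k : ℕ) : Measurable (x k) :=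
  (measurable_iSup_comap_of_recursion hΦ hx0 hrec k).mono
    (iSup₂_le fun i _ => (hξ i).comap_le) le_rfl

theorem indepFun_of_recursion {Q : Measure Ω'} (hξ : ∀ k, Measurable (ξ k))
    (hind : iIndepFun ξ Q) (hΦ : Measurable fun q : β × Ω => Φ q.1 q.2)
    {x₀ : β} (hx0 : ∀ ω, x 0 ω = x₀) (hrec : ∀ k ω, x (k + 1) ω = Φ (x k ω) (ξ k ω)) (k : ℕ) :
    IndepFun (x k) (ξ k) Q := by
  have h := indep_iSup_of_disjoint (fun i => (hξ i).comap_le)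
    ((iIndepFun_iff_iIndep _ _ _).1 hind) (S := Set.Iio k) (T := {k}) (by simp)
  rw [_root_.iSup_singleton] at h
  exact indep_of_indep_of_le_left h
    (measurable_iSup_comap_of_recursion hΦ hx0 hrec k).comap_le

end Recursion

section SGD

variable {E : Type*} [NormedAddCommGroup E] [InnerProductSpace ℝ E] [CompleteSpace E]
  [MeasurableSpace E] [BorelSpace E] [SecondCountableTopology E]
  {Ω : Type*} [MeasurableSpace Ω] {P : Measure Ω} [IsProbabilityMeasure P]
  {Ω' : Type*} [MeasurableSpace Ω'] {Q : Measure Ω'} [IsProbabilityMeasure Q]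
  {f : E → ℝ} {L : ℝ} {G : E → Ω → E} {σ2 γ : ℝ} {ξ : ℕ → Ω' → Ω} {x : ℕ → Ω' → E} {x₀ : E}

namespace IsStochasticGradient

theorem memLp_two_sgd_iterate (hG : IsStochasticGradient f P G σ2)
    (hL : ∀ x y, ‖gradient f x - gradient f y‖ ≤ L * ‖x - y‖) (hξ : ∀ k, Measurable (ξ k))
    (hind : iIndepFun ξ Q) (hlaw : ∀ k, Q.map (ξ k) = P) (hx0 : ∀ ω, x 0 ω = x₀)
    (hrec : ∀ k ω, x (k + 1) ω = x k ω - γ • G (x k ω) (ξ k ω)) (k : ℕ) :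
    MemLp (x k) 2 Q := by
  induction k with
  | zero =>
    rw [funext hx0]
    exact memLp_const x₀
  | succ k ih =>
    have hΦ := hG.measurable_sgd_step γ
    have hxk := measurable_of_recursion (Φ := fun v ω => v - γ • G v ω) hΦ hξ hx0 hrec k
    have hind_k := indepFun_of_recursion (Φ := fun v ω => v - γ • G v ω) hξ hind hΦ hx0 hrec k
    rw [funext (hrec k)]
    exact ih.sub ((hG.memLp_two_comp hL hxk (hξ k) hind_k (hlaw k) ih).const_smul γ)

theorem integral_sgd_iterate_succ_le (hG : IsStochasticGradient f P G σ2)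
    (hf : Differentiable ℝ f) (hL : ∀ x y, ‖gradient f x - gradient f y‖ ≤ L * ‖x - y‖)
    (hL0 : 0 ≤ L) (hγ0 : 0 ≤ γ) (hγL : γ * L ≤ 1) (hξ : ∀ k, Measurable (ξ k))
    (hind : iIndepFun ξ Q) (hlaw : ∀ k, Q.map (ξ k) = P) (hx0 : ∀ ω, x 0 ω = x₀)
    (hrec : ∀ k ω, x (k + 1) ω = x k ω - γ • G (x k ω) (ξ k ω)) (k : ℕ) :
    ∫ ω, f (x (k + 1) ω) ∂Q ≤
      ∫ ω, f (x k ω) ∂Q - γ / 2 * ∫ ω, ‖gradient f (x k ω)‖ ^ 2 ∂Q + L * γ ^ 2 / 2 * σ2 := by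
  have hΦ := hG.measurable_sgd_step γ
  have hxk := measurable_of_recursion (Φ := fun v ω => v - γ • G v ω) hΦ hξ hx0 hrec k
  have hind_k := indepFun_of_recursion (Φ := fun v ω => v - γ • G v ω) hξ hind hΦ hx0 hrec k
  simp_rw [hrec k]
  exact hG.integral_apply_sub_smul_comp_le hf hL hL0 hγ0 hγL hxk (hξ k) hind_k (hlaw k)
    (hG.memLp_two_sgd_iterate hL hξ hind hlaw hx0 hrec k)

end IsStochasticGradient

end SGD

theorem add_sum_le_of_le_sub_add {a b : ℕ → ℝ} {c : ℝ} (h : ∀ k, a (k + 1) ≤ a k - b k + c)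
    (K : ℕ) : a K + ∑ k ∈ range K, b k ≤ a 0 + K * c := by
  induction K with
  | zero => simp
  | succ K ih =>
    rw [sum_range_succ, Nat.cast_succ]
    linarith [h K]

theorem one_le_min_mul_add_div {L σ2 ε : ℝ} (hL : 0 < L) (hσ2 : 0 < σ2) (hε : 0 < ε) :
    1 ≤ min (1 / L) (ε / (2 * L * σ2)) * (L + 2 * L * σ2 / ε) := by
  rcases min_cases (1 / L) (ε / (2 * L * σ2)) with ⟨h, -⟩ | ⟨h, -⟩ <;> rw [h]
  · rw [one_div_mul_eq_div, le_div_iff₀ hL]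
    linarith [show 0 < 2 * L * σ2 / ε by positivity]
  · rw [div_mul_eq_mul_div, le_div_iff₀ (by positivity)]
    field_simp
    nlinarith [mul_pos hε hL]

theorem one_div_mul_le_of_descent {L σ2 ε Δ γ S : ℝ} {K : ℕ} (hL : 0 < L) (hσ2 : 0 < σ2)
    (hε : 0 < ε) (hΔ : 0 ≤ Δ) (hγ : γ = min (1 / L) (ε / (2 * L * σ2)))
    (hK : 4 * Δ * L / ε + 8 * Δ * L * σ2 / ε ^ 2 ≤ K)
    (hS : γ / 2 * S ≤ Δ + K * (L * γ ^ 2 / 2 * σ2)) :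
    1 / (K : ℝ) * S ≤ ε := by
  rcases K.eq_zero_or_pos with rfl | hK0
  · simpa using hε.le
  have hK0 : (0 : ℝ) < K := by exact_mod_cast hK0
  have hγ0 : 0 < γ := hγ ▸ lt_min (by positivity) (by positivity)
  have hγσ : L * γ * σ2 ≤ ε / 2 := by
    have : γ ≤ ε / (2 * L * σ2) := hγ ▸ min_le_right _ _
    rw [le_div_iff₀ (by positivity)] at this
    linarith
  have hΔK : 4 * Δ ≤ γ * ε * K := by
    have hγ1 := hγ ▸ one_le_min_mul_add_div hL hσ2 hε
    have hK' : 4 * Δ / ε * (L + 2 * L * σ2 / ε) ≤ K := by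
      convert hK using 1; field_simp; ring
    calc 4 * Δ ≤ 4 * Δ * (γ * (L + 2 * L * σ2 / ε)) := le_mul_of_one_le_right (by positivity) hγ1
      _ = γ * ε * (4 * Δ / ε * (L + 2 * L * σ2 / ε)) := by field_simp
      _ ≤ γ * ε * K := by gcongr
  rw [one_div_mul_eq_div, div_le_iff₀ hK0]
  have : γ * (K * (L * γ * σ2)) ≤ γ * (K * (ε / 2)) := by gcongr
  nlinarith

theorem stmt7 {d : ℕ} (f : EuclideanSpace ℝ (Fin d) → ℝ)
    (L : ℝ) (hL : 0 < L)
    (hdiff : Differentiable ℝ f)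
    (hsmooth : ∀ x y, ‖gradient f x - gradient f y‖ ≤ L * ‖x - y‖)
    (fstar : ℝ) (hlb : ∀ x, fstar ≤ f x)
    (x₀ : EuclideanSpace ℝ (Fin d)) (Δ : ℝ) (hΔ : Δ = f x₀ - fstar)
    (σ2 ε : ℝ) (hσ2 : 0 < σ2) (hε : 0 < ε)
    {Ω : Type*} [MeasurableSpace Ω] (P : Measure Ω) [IsProbabilityMeasure P]
    (G : EuclideanSpace ℝ (Fin d) → Ω → EuclideanSpace ℝ (Fin d))
    (hGmeas : Measurable (fun q : EuclideanSpace ℝ (Fin d) × Ω => G q.1 q.2))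
    (hGint : ∀ x, Integrable (G x) P)
    (hGsqint : ∀ x, Integrable (fun ω => ‖G x ω - gradient f x‖^2) P)
    (hGunbiased : ∀ x, ∫ ω, G x ω ∂P = gradient f x)
    (hGvar : ∀ x, ∫ ω, ‖G x ω - gradient f x‖^2 ∂P ≤ σ2)
    {Ω' : Type*} [MeasurableSpace Ω'] (Q : Measure Ω') [IsProbabilityMeasure Q]
    (ξ : ℕ → Ω' → Ω) (hξmeas : ∀ k, Measurable (ξ k))
    (hindep : iIndepFun ξ Q)
    (hdist : ∀ k, Measure.map (ξ k) Q = P)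
    (γ : ℝ) (hγ : γ = min (1 / L) (ε / (2 * L * σ2)))
    (x : ℕ → Ω' → EuclideanSpace ℝ (Fin d))
    (hx0 : ∀ ω, x 0 ω = x₀)
    (hxrec : ∀ k ω, x (k + 1) ω = x k ω - γ • G (x k ω) (ξ k ω)) :
    ∀ K : ℕ, 4 * Δ * L / ε + 8 * Δ * L * σ2 / ε^2 ≤ K →
      (1 / (K : ℝ)) * ∑ k ∈ Finset.range K, ∫ ω, ‖gradient f (x k ω)‖^2 ∂Q ≤ ε := by
  intro K hK
  have hG : IsStochasticGradient f P G σ2 := ⟨hGmeas, hGint, hGsqint, hGunbiased, hGvar⟩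
  have hγ0 : 0 < γ := hγ ▸ lt_min (by positivity) (by positivity)
  have hγL : γ * L ≤ 1 := by
    have : γ ≤ 1 / L := hγ ▸ min_le_left _ _
    rwa [le_div_iff₀ hL] at this
  have hdescent := add_sum_le_of_le_sub_add (a := fun k => ∫ ω, f (x k ω) ∂Q)
    (b := fun k => γ / 2 * ∫ ω, ‖gradient f (x k ω)‖ ^ 2 ∂Q)
    (hG.integral_sgd_iterate_succ_le hdiff hsmooth hL.le hγ0.le hγL hξmeas hindep hdist hx0
      hxrec) K
  have hfK : fstar ≤ ∫ ω, f (x K ω) ∂Q := by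
    have hint := integrable_comp_of_memLp_two hdiff hsmooth
      (hG.memLp_two_sgd_iterate hsmooth hξmeas hindep hdist hx0 hxrec K)
    simpa using integral_mono (integrable_const fstar) hint fun ω => hlb (x K ω)
  simp only [hx0, integral_const, probReal_univ, one_smul, ← mul_sum] at hdescent
  exact one_div_mul_le_of_descent hL hσ2 hε (hΔ ▸ sub_nonneg.2 (hlb x₀)) hγ hK (by linarith)
end

section
/- Fix a natural number T ≥ 1, reals l > 0 and η > 0, and define f̃ : ℝ^{T+1} → ℝ by f̃(x) = max_{1 ≤ r ≤ T+1} (l·x_r − 5l²·(r−1)/η). Then: (i) f̃ is convex; (ii) f̃ is l-Lipschitz with respect to the Euclidean norm, i.e., |f̃(x) − f̃(y)| ≤ l·‖x − y‖ for all x, y ∈ ℝ^{T+1}; and (iii) the minimum of f̃ over the closed Euclidean unit ball B₂(0,1) = {x ∈ ℝ^{T+1} : ‖x‖ ≤ 1} satisfies min_{x ∈ B₂(0,1)} f̃(x) ≤ −l/√(T+1). -/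
open Finset

/-!
`f̃` is a finite maximum of the affine functions `x ↦ l x_r - c_r`; each of them is convex and
`l`-Lipschitz because a coordinate projection is `1`-Lipschitz for the Euclidean norm, and both
properties pass to finite maxima. The unit vector with all coordinates `-1/√(T+1)` witnesses the
bound on the minimum, since the offsets `c_r = 5 l² (r-1)/η` are nonnegative.
-/

theorem ConvexOn.finset_sup' {𝕜 E β ι : Type*} [Semiring 𝕜] [PartialOrder 𝕜]
    [AddCommMonoid E] [AddCommMonoid β] [LinearOrder β] [IsOrderedAddMonoid β]
    [SMul 𝕜 E] [Module 𝕜 β] [PosSMulStrictMono 𝕜 β] {s : Set E} {t : Finset ι}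
    (ht : t.Nonempty) {f : ι → E → β} (hf : ∀ i ∈ t, ConvexOn 𝕜 s (f i)) :
    ConvexOn 𝕜 s fun x => t.sup' ht fun i => f i x := by
  have := Finset.sup'_induction ht f (fun _ h₁ _ h₂ => h₁.sup h₂) hf
  rwa [funext (Finset.sup'_apply ht f)] at this

theorem LipschitzWith.finset_sup' {α ι : Type*} [PseudoEMetricSpace α] {K : NNReal}
    {t : Finset ι} (ht : t.Nonempty) {f : ι → α → ℝ} (hf : ∀ i ∈ t, LipschitzWith K (f i)) :
    LipschitzWith K fun x => t.sup' ht fun i => f i x := by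
  have := Finset.sup'_induction ht f (fun _ h₁ _ h₂ => max_self K ▸ h₁.max h₂) hf
  rwa [funext (Finset.sup'_apply ht f)] at this

section EuclideanSpace

variable {ι : Type*}

theorem convexOn_mul_apply_sub (l c : ℝ) (r : ι) :
    ConvexOn ℝ Set.univ fun x : EuclideanSpace ℝ ι => l * x r - c :=
  ⟨convex_univ, fun x _ y _ a b _ _ hab => le_of_eq <| by
    simp only [PiLp.add_apply, PiLp.smul_apply, smul_eq_mul]
    linear_combination c * hab⟩

theorem lipschitzWith_mul_apply_sub [Fintype ι] (l : NNReal) (c : ℝ) (r : ι) :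
    LipschitzWith l fun x : EuclideanSpace ℝ ι => l * x r - c :=
  LipschitzWith.of_dist_le_mul fun x y => by
    rw [Real.dist_eq, sub_sub_sub_cancel_right, ← mul_sub, abs_mul, NNReal.abs_eq]
    exact mul_le_mul_of_nonneg_left (PiLp.dist_apply_le x y r) l.2

theorem norm_toLp_const_neg_inv_sqrt_card [Fintype ι] [Nonempty ι] :
    ‖(WithLp.toLp 2 fun _ => -1 / √(Fintype.card ι) : EuclideanSpace ℝ ι)‖ = 1 := by
  have : (0 : ℝ) < Fintype.card ι := Nat.cast_pos.2 Fintype.card_pos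
  rw [EuclideanSpace.norm_eq]
  simp [this.ne']

end EuclideanSpace

theorem stmt16_general (T : ℕ) (l η : ℝ) (hl : 0 < l) (hη : 0 < η)
    (ftil : EuclideanSpace ℝ (Fin (T + 1)) → ℝ)
    (hftil : ∀ x, ftil x = Finset.univ.sup' Finset.univ_nonempty
      (fun r : Fin (T + 1) => l * x r - 5 * l^2 * ((r : ℕ) : ℝ) / η)) :
    ConvexOn ℝ Set.univ ftil ∧
    (∀ x y, |ftil x - ftil y| ≤ l * ‖x - y‖) ∧
    (∃ x : EuclideanSpace ℝ (Fin (T + 1)), ‖x‖ ≤ 1 ∧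
      ftil x ≤ -l / Real.sqrt ((T : ℝ) + 1)) := by
  obtain rfl : ftil = _ := funext hftil
  let L : NNReal := ⟨l, hl.le⟩
  have hcard : (Fintype.card (Fin (T + 1)) : ℝ) = T + 1 := by simp
  refine ⟨ConvexOn.finset_sup' _ fun r _ => convexOn_mul_apply_sub _ _ r, fun x y => ?_, ?_⟩
  · have hlip := LipschitzWith.finset_sup' univ_nonempty fun (r : Fin (T + 1)) _ =>
      lipschitzWith_mul_apply_sub L (5 * l ^ 2 * ((r : ℕ) : ℝ) / η) r
    have := hlip.dist_le_mul x y
    rwa [Real.dist_eq, dist_eq_norm] at this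
  · refine ⟨_, (hcard ▸ norm_toLp_const_neg_inv_sqrt_card (ι := Fin (T + 1))).le,
      sup'_le _ _ fun r _ => ?_⟩
    have hoffset : 0 ≤ 5 * l ^ 2 * ((r : ℕ) : ℝ) / η := by positivity
    have hvalue : l * (-1 / √((T : ℝ) + 1)) = -l / √((T : ℝ) + 1) := by ring
    linarith

theorem stmt16 (T : ℕ) (hT : 1 ≤ T) (l η : ℝ) (hl : 0 < l) (hη : 0 < η)
    (ftil : EuclideanSpace ℝ (Fin (T + 1)) → ℝ)
    (hftil : ∀ x, ftil x = Finset.univ.sup' Finset.univ_nonempty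
      (fun r : Fin (T + 1) => l * x r - 5 * l^2 * ((r : ℕ) : ℝ) / η)) :
    ConvexOn ℝ Set.univ ftil ∧
    (∀ x y, |ftil x - ftil y| ≤ l * ‖x - y‖) ∧
    (∃ x : EuclideanSpace ℝ (Fin (T + 1)), ‖x‖ ≤ 1 ∧
      ftil x ≤ -l / Real.sqrt ((T : ℝ) + 1)) :=
  stmt16_general T l η hl hη ftil hftil
end

section
/- Let n ≥ 1 be a natural number and let a be a real number with 1 ≤ a ≤ n. Then 2·√a ≤ min_{m ∈ {1,…,n}} √m·(1 + a/m) ≤ 2·√2·√a. -/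
/-! The function `m ↦ √m · (1 + a/m) = √m + a/√m` is bounded below by `2√a` by AM-GM, with
equality at `m = a`. Evaluating it at the admissible integer `m = ⌈a⌉₊ ∈ [a, 2a]` bounds the
minimum above, since there `1 + a/m ≤ 2` and `√m ≤ √(2a)`. -/

open Finset

namespace Real

theorem two_mul_sqrt_le_sqrt_mul_one_add_div {x a : ℝ} (hx : 0 < x) (ha : 0 ≤ a) :
    2 * √a ≤ √x * (1 + a / x) := by
  have hsx : 0 < √x := sqrt_pos.mpr hx
  have hexpand : √x * (1 + a / x) * √x = √x ^ 2 + √a ^ 2 := by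
    rw [sq_sqrt hx.le, sq_sqrt ha]
    field_simp
    rw [sq_sqrt hx.le]
  rw [← mul_le_mul_iff_of_pos_right hsx, hexpand]
  linarith [two_mul_le_add_sq (√x) (√a)]

theorem sqrt_mul_one_add_div_le {x a : ℝ} (hax : a ≤ x) (hx : x ≤ 2 * a) :
    √x * (1 + a / x) ≤ 2 * √2 * √a := by
  rcases le_or_gt x 0 with hx0 | hx0
  · rw [sqrt_eq_zero_of_nonpos hx0, zero_mul]
    positivity
  have hdiv : 1 + a / x ≤ 2 := by linarith [(div_le_one hx0).mpr hax]
  have hdiv_nonneg : 0 ≤ 1 + a / x := by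
    have : 0 ≤ a / x := div_nonneg (by linarith) hx0.le
    linarith
  have hsqrt : √x ≤ √2 * √a := by
    rw [← sqrt_mul zero_le_two]
    exact sqrt_le_sqrt hx
  calc √x * (1 + a / x) ≤ (√2 * √a) * 2 := by gcongr
    _ = 2 * √2 * √a := by ring

end Real

theorem stmt17 (n : ℕ) (hn : 1 ≤ n) (a : ℝ) (ha1 : 1 ≤ a) (han : a ≤ n) :
    2 * Real.sqrt a ≤
      (Finset.Icc 1 n).inf' (Finset.nonempty_Icc.mpr hn)
        (fun m => Real.sqrt m * (1 + a / m)) ∧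
    (Finset.Icc 1 n).inf' (Finset.nonempty_Icc.mpr hn)
        (fun m => Real.sqrt m * (1 + a / m)) ≤
      2 * Real.sqrt 2 * Real.sqrt a := by
  refine ⟨Finset.le_inf' _ _ fun m hm => ?_, ?_⟩
  · have hm : (0 : ℝ) < m := Nat.cast_pos.mpr (mem_Icc.mp hm).1
    exact Real.two_mul_sqrt_le_sqrt_mul_one_add_div hm (by linarith)
  · have hceil : ⌈a⌉₊ ∈ Icc 1 n :=
      mem_Icc.mpr ⟨Nat.one_le_ceil_iff.mpr (by linarith), Nat.ceil_le.mpr han⟩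
    exact (Finset.inf'_le _ hceil).trans <|
      Real.sqrt_mul_one_add_div_le (Nat.le_ceil a) (Nat.ceil_le_two_mul (by linarith))
end
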